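/- arXiv:1604.07188 — 5 statements merged into one kernel-verified Lean document; each statement's English description precedes it below -/
import Mathlib

section
/- Let 0 < α < 1, X > 0, and let y be three times continuously differentiable on [0, X]. Fix x ∈ (0, X]. Then there is a constant C > 0 such that for every positive integer n, with h = x/n, |(1/(Γ(1−α) h^α)) ∑_{k=0}^{n} ω_k y(x − kh) − D^α y(x)| ≤ C h^{1−α}. -/
open Finset

/-- Real values of the Riemann zeta function (real part of the analytic continuation). -/
noncomputable def zetaR (s : ℝ) : ℝ := (riemannZeta (s : ℂ)).re

/-- Caputo derivative of order `α` (for `0 < α < 1`). -/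
noncomputable def caputo (α : ℝ) (y : ℝ → ℝ) (x : ℝ) : ℝ :=
  (1 / Real.Gamma (1 - α)) * ∫ t in (0:ℝ)..x, deriv y t * (x - t) ^ (-α)

/-- Weights `ω_k` of the midpoint-based approximation. -/
noncomputable def wgt (α : ℝ) (n k : ℕ) : ℝ :=
  if k = 0 then (2:ℝ) ^ α
  else if k = n then -((2:ℝ) ^ α) * (2 * (n:ℝ) - 1) ^ (-α)
  else (2:ℝ) ^ α * ((2 * (k:ℝ) + 1) ^ (-α) - (2 * (k:ℝ) - 1) ^ (-α))

/-- Weights `σ̄_k` of the order `2 - α` approximation (before endpoint correction). -/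
noncomputable def sigmab (α : ℝ) (n k : ℕ) : ℝ :=
  if k = 0 then wgt α n 0 - ((2:ℝ) ^ α - 1) * zetaR α
  else if k = 1 then wgt α n 1 + ((2:ℝ) ^ α - 1) * zetaR α
  else wgt α n k

/-- The quantity `W_n`. -/
noncomputable def Wn (α : ℝ) (n : ℕ) : ℝ :=
  zetaR α - (n:ℝ) ^ (1 - α) / (1 - α) +
    (2:ℝ) ^ α * ((∑ k ∈ Finset.Icc 1 n, (2 * (k:ℝ) - 1) ^ (-α)) - zetaR α)

/-- Weights `σ_k` of the order `2 - α` approximation. -/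
noncomputable def sigmaw (α : ℝ) (n k : ℕ) : ℝ :=
  if k = n - 1 then sigmab α n k - Wn α n
  else if k = n then sigmab α n k + Wn α n
  else sigmab α n k

/-- Weights `δ̄_k` of the second-order approximation (before endpoint correction). -/
noncomputable def deltab (α : ℝ) (n k : ℕ) : ℝ :=
  if k = 0 then wgt α n 0 + (3/2) * (1 - (2:ℝ) ^ α) * zetaR α + ((2:ℝ) ^ (α - 1) - 1) * zetaR (α - 1)
  else if k = 1 then wgt α n 1 - 2 * (1 - (2:ℝ) ^ α) * zetaR α - 2 * ((2:ℝ) ^ (α - 1) - 1) * zetaR (α - 1)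
  else if k = 2 then wgt α n 2 + (1/2) * (1 - (2:ℝ) ^ α) * zetaR α + ((2:ℝ) ^ (α - 1) - 1) * zetaR (α - 1)
  else wgt α n k

/-- Weights `δ_k` of the second-order approximation. -/
noncomputable def deltaw (α : ℝ) (n k : ℕ) : ℝ :=
  if k = n - 1 then deltab α n k - Wn α n
  else if k = n then deltab α n k + Wn α n
  else deltab α n k

/-!
Summation by parts and `2 ^ α * (2 * k + 1) ^ (-α) = h ^ α * ((k + 1/2) * h) ^ (-α)` turn
`h ^ (-α) * ∑ ω_k y (x - k h)` into `∑_k ((k + 1/2) h) ^ (-α) ∫_{kh}^{(k+1)h} y' (x - s) ds`: the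
Caputo integral `∫₀ˣ y' (x - s) s ^ (-α) ds` with the kernel frozen at the midpoint of each cell.
Hence the error is at most `sup |y'|` times the L¹ error of the frozen kernel. On the first cell
both kernels integrate to `O(h ^ (1 - α))`; on cell `k ≥ 1` the kernel varies by at most
`(k h) ^ (-α) - ((k + 1) h) ^ (-α)`, and these differences, times the cell length `h`, telescope
to at most `h ^ (1 - α)`.
-/

open MeasureTheory Set

theorem sum_wgt_mul_eq (α : ℝ) {n : ℕ} (hn : 0 < n) (f : ℕ → ℝ) :
    ∑ k ∈ range (n + 1), wgt α n k * f k =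
      ∑ k ∈ range n, (2 : ℝ) ^ α * (2 * (k : ℝ) + 1) ^ (-α) * (f k - f (k + 1)) := by
  set c : ℕ → ℝ := fun k => (2 : ℝ) ^ α * (2 * (k : ℝ) + 1) ^ (-α)
  have hwgt : ∀ k ∈ range (n + 1), wgt α n k * f k =
      (if k < n then c k * f k else 0) - (if k = 0 then 0 else c (k - 1) * f k) := by
    intro k hk
    obtain rfl | hk0 := eq_or_ne k 0
    · simp [wgt, c, hn]
    have hcast : ((k - 1 : ℕ) : ℝ) = k - 1 := by
      rw [Nat.cast_sub (Nat.one_le_iff_ne_zero.2 hk0), Nat.cast_one]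
    obtain rfl | hkn := eq_or_ne k n
    · simp only [wgt, c, hcast, if_neg hk0, lt_irrefl, if_false, if_true]
      ring_nf
    · have hlt : k < n := lt_of_le_of_ne (Nat.lt_succ_iff.1 (mem_range.1 hk)) hkn
      simp only [wgt, c, hcast, if_neg hk0, if_neg hkn, if_pos hlt]
      ring_nf
  rw [sum_congr rfl hwgt, sum_sub_distrib, sum_range_succ, sum_range_succ', if_neg (lt_irrefl n),
    if_pos rfl, add_zero, add_zero, ← sum_sub_distrib]
  refine sum_congr rfl fun k hk => ?_
  simp [if_pos (mem_range.1 hk), c, mul_sub]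

theorem rpow_neg_mul_self_eq {α h : ℝ} (hh : 0 < h) {c : ℝ} (hc : 0 ≤ c) :
    (c * h) ^ (-α) * h = c ^ (-α) * h ^ (1 - α) := by
  rw [Real.mul_rpow hc hh.le, sub_eq_add_neg, Real.rpow_add hh, Real.rpow_one]
  ring

theorem abs_integral_mul_sub_rpow_le {α u v c M : ℝ} {G : ℝ → ℝ} (hα : 0 ≤ α) (hu : 0 < u)
    (huv : u ≤ v) (hcv : v ^ (-α) ≤ c) (hcu : c ≤ u ^ (-α)) (hG : ∀ s ∈ Ioc u v, |G s| ≤ M) :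
    |∫ s in u..v, G s * (c - s ^ (-α))| ≤ M * (u ^ (-α) - v ^ (-α)) * (v - u) := by
  have hα' : -α ≤ 0 := neg_nonpos.2 hα
  rw [← abs_of_nonneg (sub_nonneg.2 huv), ← Real.norm_eq_abs]
  refine intervalIntegral.norm_integral_le_of_norm_le_const fun s hs => ?_
  rw [uIoc_of_le huv] at hs
  have hsu : s ^ (-α) ≤ u ^ (-α) := Real.rpow_le_rpow_of_nonpos hu hs.1.le hα'
  have hsv : v ^ (-α) ≤ s ^ (-α) := Real.rpow_le_rpow_of_nonpos (hu.trans hs.1) hs.2 hα'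
  rw [Real.norm_eq_abs, abs_mul]
  exact mul_le_mul (hG s hs) (abs_sub_le_iff.2 ⟨by linarith, by linarith⟩) (abs_nonneg _)
    ((abs_nonneg _).trans (hG s hs))

theorem abs_integral_mul_sub_rpow_le_of_zero {α v c M : ℝ} {G : ℝ → ℝ} (hα : α < 1) (hv : 0 < v)
    (hc : 0 ≤ c) (hG : ∀ s ∈ Ioc 0 v, |G s| ≤ M) :
    |∫ s in 0..v, G s * (c - s ^ (-α))| ≤ M * (v * c + v ^ (1 - α) / (1 - α)) := by
  have hM : 0 ≤ M := (abs_nonneg _).trans (hG v ⟨hv, le_rfl⟩)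
  have hint : IntervalIntegrable (fun s : ℝ => s ^ (-α)) volume 0 v :=
    intervalIntegral.intervalIntegrable_rpow' (by linarith)
  have hpow : ∫ s in 0..v, s ^ (-α) = v ^ (1 - α) / (1 - α) := by
    rw [integral_rpow (Or.inl (by linarith)), Real.zero_rpow (by linarith), neg_add_eq_sub]
    ring
  calc |∫ s in 0..v, G s * (c - s ^ (-α))|
      ≤ ∫ s in 0..v, M * (c + s ^ (-α)) := by
        rw [← Real.norm_eq_abs]
        refine intervalIntegral.norm_integral_le_of_norm_le hv.le (ae_of_all _ fun s hs => ?_)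
          ((intervalIntegrable_const.add hint).const_mul M)
        have hs0 : 0 ≤ s ^ (-α) := Real.rpow_nonneg hs.1.le _
        rw [Real.norm_eq_abs, abs_mul]
        exact mul_le_mul (hG s hs) (abs_sub_le_iff.2 ⟨by linarith, by linarith⟩) (abs_nonneg _) hM
    _ = M * (v * c + v ^ (1 - α) / (1 - α)) := by
        rw [intervalIntegral.integral_const_mul,
          intervalIntegral.integral_add intervalIntegrable_const hint,
          intervalIntegral.integral_const, hpow, sub_zero, smul_eq_mul]

theorem sum_mul_integral_sub_integral_mul_eq {h : ℝ} (hh : 0 ≤ h) {n : ℕ} (c : ℕ → ℝ)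
    {G K : ℝ → ℝ} (hG : ContinuousOn G (Icc 0 (n * h)))
    (hK : IntervalIntegrable K volume 0 (n * h)) :
    ∑ k ∈ range n, c k * (∫ s in k * h..(k + 1) * h, G s) - ∫ s in 0..n * h, G s * K s =
      ∑ k ∈ range n, ∫ s in k * h..(k + 1) * h, G s * (c k - K s) := by
  have hsub : ∀ k < n, uIcc ((k : ℝ) * h) ((k + 1) * h) ⊆ uIcc 0 (n * h) := fun k hk => by
    rw [Set.uIcc_of_le (by gcongr; linarith), Set.uIcc_of_le (by positivity)]
    exact Icc_subset_Icc (by positivity) (by gcongr; exact_mod_cast hk)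
  have hGk : ∀ k < n, ContinuousOn G (uIcc ((k : ℝ) * h) ((k + 1) * h)) := fun k hk =>
    hG.mono ((hsub k hk).trans (Set.uIcc_of_le (by positivity)).subset)
  have hGK : ∀ k < n,
      IntervalIntegrable (fun s => G s * K s) volume ((k : ℝ) * h) ((k + 1) * h) := fun k hk =>
    (hK.mono_set (hsub k hk)).continuousOn_mul (hGk k hk)
  have hsplit : ∫ s in 0..n * h, G s * K s =
      ∑ k ∈ range n, ∫ s in k * h..(k + 1) * h, G s * K s := by
    have := intervalIntegral.sum_integral_adjacent_intervals (a := fun k : ℕ => (k : ℝ) * h)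
      fun k hk => by simpa using hGK k hk
    simpa using this.symm
  rw [hsplit, ← sum_sub_distrib]
  refine sum_congr rfl fun k hk => ?_
  simp only [mul_sub, mul_comm (G _) (c k)]
  rw [intervalIntegral.integral_sub ((hGk k (mem_range.1 hk)).intervalIntegrable.const_mul _)
    (by simpa only [mul_comm] using hGK k (mem_range.1 hk)), intervalIntegral.integral_const_mul]

theorem abs_integral_midpoint_error_le_of_zero {α h M : ℝ} {G : ℝ → ℝ} (hα : α < 1) (hh : 0 < h)
    (hG : ∀ s ∈ Ioc 0 h, |G s| ≤ M) :
    |∫ s in 0..h, G s * ((h / 2) ^ (-α) - s ^ (-α))| ≤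
      M * ((2 : ℝ) ^ α + 1 / (1 - α)) * h ^ (1 - α) := by
  have hmid : h * (h / 2) ^ (-α) = (2 : ℝ) ^ α * h ^ (1 - α) := by
    rw [mul_comm, div_eq_inv_mul, rpow_neg_mul_self_eq hh (by norm_num),
      Real.inv_rpow (by norm_num), Real.rpow_neg (by norm_num), inv_inv]
  have := abs_integral_mul_sub_rpow_le_of_zero hα hh (c := (h / 2) ^ (-α)) (by positivity) hG
  rw [hmid] at this
  exact this.trans_eq (by ring)

theorem abs_integral_midpoint_error_le {α h M : ℝ} {G : ℝ → ℝ} (hα : 0 ≤ α) (hh : 0 < h) {k : ℕ}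
    (hk : 0 < k) (hG : ∀ s ∈ Ioc (k * h) ((k + 1) * h), |G s| ≤ M) :
    |∫ s in k * h..(k + 1) * h, G s * ((((k : ℝ) + 1 / 2) * h) ^ (-α) - s ^ (-α))| ≤
      M * h ^ (1 - α) * ((k : ℝ) ^ (-α) - ((k + 1 : ℕ) : ℝ) ^ (-α)) := by
  have hkh : 0 < (k : ℝ) * h := by positivity
  have hα' : -α ≤ 0 := neg_nonpos.2 hα
  calc _ ≤ M * (((k : ℝ) * h) ^ (-α) - (((k : ℝ) + 1) * h) ^ (-α)) * ((k + 1) * h - k * h) :=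
        abs_integral_mul_sub_rpow_le hα hkh (by gcongr; linarith)
          (Real.rpow_le_rpow_of_nonpos (by positivity) (by gcongr; norm_num) hα')
          (Real.rpow_le_rpow_of_nonpos hkh (by gcongr; linarith) hα') hG
    _ = M * h ^ (1 - α) * ((k : ℝ) ^ (-α) - ((k + 1 : ℕ) : ℝ) ^ (-α)) := by
        rw [show ((k : ℝ) + 1) * h - k * h = h by ring, mul_assoc, sub_mul,
          rpow_neg_mul_self_eq hh (by positivity), rpow_neg_mul_self_eq hh (by positivity)]
        push_cast
        ring

theorem sum_range_natCast_rpow_neg_sub_le_one (α : ℝ) (j : ℕ) :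
    ∑ k ∈ range j, (((k + 1 : ℕ) : ℝ) ^ (-α) - ((k + 1 + 1 : ℕ) : ℝ) ^ (-α)) ≤ 1 := by
  rw [sum_range_sub' (fun k => ((k + 1 : ℕ) : ℝ) ^ (-α))]
  simp only [zero_add, Nat.cast_one, Real.one_rpow, sub_le_self_iff]
  positivity

theorem abs_sum_midpoint_mul_integral_sub_le {α h M : ℝ} (hα0 : 0 ≤ α) (hα1 : α < 1) (hh : 0 < h)
    {n : ℕ} (hn : 0 < n) {G : ℝ → ℝ} (hG : ContinuousOn G (Icc 0 (n * h)))
    (hM : ∀ s ∈ Icc 0 (n * h), |G s| ≤ M) :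
    |∑ k ∈ range n, (((k : ℝ) + 1 / 2) * h) ^ (-α) * (∫ s in k * h..(k + 1) * h, G s) -
        ∫ s in 0..n * h, G s * s ^ (-α)| ≤
      M * ((2 : ℝ) ^ α + 1 / (1 - α) + 1) * h ^ (1 - α) := by
  have hMk : ∀ k < n, ∀ s ∈ Ioc ((k : ℝ) * h) ((k + 1) * h), |G s| ≤ M := fun k hk s hs =>
    hM s ⟨(by positivity : (0 : ℝ) ≤ k * h).trans hs.1.le,
      hs.2.trans (by gcongr; exact_mod_cast hk)⟩
  set E : ℕ → ℝ := fun k =>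
    ∫ s in k * h..(k + 1) * h, G s * ((((k : ℝ) + 1 / 2) * h) ^ (-α) - s ^ (-α))
  have hE0 : |E 0| ≤ M * ((2 : ℝ) ^ α + 1 / (1 - α)) * h ^ (1 - α) := by
    simpa [E, div_eq_inv_mul] using
      abs_integral_midpoint_error_le_of_zero hα1 hh (by simpa using hMk 0 hn)
  rw [sum_mul_integral_sub_integral_mul_eq hh.le _ hG
    (intervalIntegral.intervalIntegrable_rpow' (by linarith))]
  obtain ⟨j, rfl⟩ := Nat.exists_eq_add_of_lt hn
  calc |∑ k ∈ range (0 + j + 1), E k|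
      ≤ ∑ k ∈ range j, |E (k + 1)| + |E 0| := by
        rw [zero_add, ← sum_range_succ' (fun k => |E k|)]
        exact abs_sum_le_sum_abs _ _
    _ ≤ M * h ^ (1 - α) * ∑ k ∈ range j,
          (((k + 1 : ℕ) : ℝ) ^ (-α) - ((k + 1 + 1 : ℕ) : ℝ) ^ (-α)) +
        M * ((2 : ℝ) ^ α + 1 / (1 - α)) * h ^ (1 - α) := by
      rw [mul_sum]
      gcongr with k hk
      exact abs_integral_midpoint_error_le hα0 hh k.succ_pos
        (hMk (k + 1) (by simp at hk; omega))
    _ ≤ M * ((2 : ℝ) ^ α + 1 / (1 - α) + 1) * h ^ (1 - α) := by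
      have hM0 : 0 ≤ M := (abs_nonneg _).trans (hM 0 ⟨le_rfl, by positivity⟩)
      nlinarith [sum_range_natCast_rpow_neg_sub_le_one α j,
        mul_nonneg hM0 (Real.rpow_nonneg hh.le (1 - α))]

theorem two_rpow_mul_rpow_neg_div_eq {α h : ℝ} (hh : 0 < h) {k : ℝ} (hk : 0 ≤ k) :
    (2 : ℝ) ^ α * (2 * k + 1) ^ (-α) / h ^ α = ((k + 1 / 2) * h) ^ (-α) := by
  rw [show (k + 1 / 2) * h = (2 * k + 1) * h / 2 by ring,
    Real.div_rpow (by positivity) (by norm_num), Real.mul_rpow (by positivity) hh.le,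
    Real.rpow_neg hh.le, Real.rpow_neg (by norm_num : (0 : ℝ) ≤ 2)]
  field_simp

theorem integral_eq_sub_of_hasDerivAt_of_Icc_subset {y g : ℝ → ℝ} {a b u v : ℝ}
    (hy : ContinuousOn y (Icc a b)) (hyg : ∀ t ∈ Ioo a b, HasDerivAt y (g t) t)
    (hg : ContinuousOn g (Icc a b)) (huv : u ≤ v) (hsub : Icc u v ⊆ Icc a b) :
    ∫ t in u..v, g t = y v - y u :=
  intervalIntegral.integral_eq_sub_of_hasDerivAt_of_le huv (hy.mono hsub)
    (fun t ht => hyg t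
      ⟨(hsub ⟨le_rfl, huv⟩).1.trans_lt ht.1, ht.2.trans_le (hsub ⟨huv, le_rfl⟩).2⟩)
    ((hg.mono hsub).intervalIntegrable_of_Icc huv)

theorem abs_sum_wgt_mul_div_sub_integral_le {α h x M : ℝ} (hα0 : 0 ≤ α) (hα1 : α < 1) (hh : 0 < h)
    {n : ℕ} (hn : 0 < n) (hx : n * h = x) {y g : ℝ → ℝ} (hy : ContinuousOn y (Icc 0 x))
    (hyg : ∀ t ∈ Ioo 0 x, HasDerivAt y (g t) t) (hg : ContinuousOn g (Icc 0 x))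
    (hM : ∀ t ∈ Icc 0 x, |g t| ≤ M) :
    |(∑ k ∈ range (n + 1), wgt α n k * y (x - k * h)) / h ^ α -
        ∫ t in 0..x, g t * (x - t) ^ (-α)| ≤
      M * ((2 : ℝ) ^ α + 1 / (1 - α) + 1) * h ^ (1 - α) := by
  subst hx
  have hmaps : MapsTo (fun s => n * h - s) (Icc 0 (n * h)) (Icc 0 (n * h)) := fun s hs =>
    ⟨by linarith [hs.2], by linarith [hs.1]⟩
  have hftc : ∀ k < n, y (n * h - k * h) - y (n * h - (k + 1) * h) =
      ∫ s in k * h..(k + 1) * h, g (n * h - s) := fun k hk => by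
    have hk' : (k : ℝ) + 1 ≤ n := by exact_mod_cast hk
    rw [intervalIntegral.integral_comp_sub_left g, integral_eq_sub_of_hasDerivAt_of_Icc_subset
      hy hyg hg (by nlinarith)
      (Icc_subset_Icc (by nlinarith) (by nlinarith [k.cast_nonneg (α := ℝ)]))]
  have hsum : (∑ k ∈ range (n + 1), wgt α n k * y (n * h - k * h)) / h ^ α =
      ∑ k ∈ range n,
        (((k : ℝ) + 1 / 2) * h) ^ (-α) * ∫ s in k * h..(k + 1) * h, g (n * h - s) := by
    rw [sum_wgt_mul_eq α hn, sum_div]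
    refine sum_congr rfl fun k hk => ?_
    rw [← hftc k (mem_range.1 hk), ← two_rpow_mul_rpow_neg_div_eq hh k.cast_nonneg]
    push_cast
    ring
  have hkernel : ∫ t in 0..n * h, g t * (n * h - t) ^ (-α) =
      ∫ s in 0..n * h, g (n * h - s) * s ^ (-α) := by
    simpa using (intervalIntegral.integral_comp_sub_left (a := 0) (b := n * h)
      (fun t => g t * (n * h - t) ^ (-α)) (n * h)).symm
  rw [hsum, hkernel]
  exact abs_sum_midpoint_mul_integral_sub_le hα0 hα1 hh hn (hg.comp (by fun_prop) hmaps)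
    fun s hs => hM _ (hmaps hs)

theorem stmt1 (α X : ℝ) (hα0 : 0 < α) (hα1 : α < 1) (hX : 0 < X)
    (y : ℝ → ℝ) (hy : ContDiffOn ℝ 3 y (Set.Icc 0 X))
    (x : ℝ) (hx : x ∈ Set.Ioc 0 X) :
    ∃ C > 0, ∀ n : ℕ, 0 < n → ∀ h : ℝ, h = x / n →
      |(1 / (Real.Gamma (1 - α) * h ^ α)) *
          (∑ k ∈ Finset.range (n + 1), wgt α n k * y (x - k * h)) -
        caputo α y x| ≤ C * h ^ (1 - α) := by
  obtain ⟨hx0, hxX⟩ := hx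
  have hΓ : 0 < Real.Gamma (1 - α) := Real.Gamma_pos_of_pos (by linarith)
  have hsub : Icc 0 x ⊆ Icc 0 X := Icc_subset_Icc le_rfl hxX
  set g := derivWithin y (Icc 0 X)
  have hg : ContinuousOn g (Icc 0 x) :=
    (hy.continuousOn_derivWithin (uniqueDiffOn_Icc hX) (by norm_num)).mono hsub
  have hyg : ∀ t ∈ Ioo 0 x, HasDerivAt y (g t) t := fun t ht =>
    have hdiff := hy.differentiableOn (by norm_num) t (hsub (Ioo_subset_Icc_self ht))
    hdiff.hasDerivWithinAt.hasDerivAt (Icc_mem_nhds ht.1 (ht.2.trans_le hxX))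
  have hcaputo : caputo α y x = (∫ t in 0..x, g t * (x - t) ^ (-α)) / Real.Gamma (1 - α) := by
    rw [caputo, one_div_mul_eq_div]
    congr 1
    refine intervalIntegral.integral_congr_ae ?_
    filter_upwards [Measure.ae_ne volume x] with t htx ht
    rw [uIoc_of_le hx0.le] at ht
    rw [(hyg t ⟨ht.1, lt_of_le_of_ne ht.2 htx⟩).deriv]
  obtain ⟨M, hM⟩ := isCompact_Icc.exists_bound_of_continuousOn hg
  refine ⟨max M 1 * ((2 : ℝ) ^ α + 1 / (1 - α) + 1) / Real.Gamma (1 - α), by positivity,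
    fun n hn h hh => ?_⟩
  have hh0 : 0 < h := by rw [hh]; positivity
  have hnh : n * h = x := by rw [hh]; field_simp
  have hbound := abs_sum_wgt_mul_div_sub_integral_le hα0.le hα1 hh0 hn hnh
    (hy.continuousOn.mono hsub) hyg hg fun t ht => (hM t ht).trans (le_max_left M 1)
  rw [hcaputo, one_div_mul_eq_div, div_mul_eq_div_div_swap, ← sub_div, abs_div,
    abs_of_pos hΓ, div_mul_eq_mul_div]
  exact div_le_div_of_nonneg_right hbound hΓ.le
end

section
/- Let 0 < α < 1, x > 0 and n ≥ 2 be an integer, and set h = x/n. Then (1/(Γ(1−α) h^α)) ∑_{k=0}^{n} σ̄_k · (n−k)h = (h^{1−α}/Γ(1−α)) · ( (1 − 2^α)ζ(α) + 2^α ∑_{k=1}^{n} (2k−1)^{−α} ). -/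
open Finset

/-! Summation by parts turns `∑ ω_k (n - k)` into the sum of the partial sums of `ω`, and these
telescope to `2^α (2j+1)^{-α}`; the endpoint weight `ω_n` carries the factor `n - n = 0`. The two
`ζ`-corrections of `σ̄₀` and `σ̄₁` enter with the factors `n` and `n - 1`, so only `-(2^α - 1) ζ(α)`
survives. -/

theorem Finset.sum_range_mul_sub_eq_sum_partialSums {R : Type*} [CommRing R] (c : ℕ → R) (n : ℕ) :
    ∑ k ∈ range n, c k * ((n : R) - k) = ∑ j ∈ range n, ∑ k ∈ range (j + 1), c k := by
  induction n with
  | zero => simp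
  | succ n ih =>
    calc ∑ k ∈ range (n + 1), c k * (((n + 1 : ℕ) : R) - k)
        = ∑ k ∈ range (n + 1), c k * ((n : R) - k) + ∑ k ∈ range (n + 1), c k := by
          rw [← sum_add_distrib]
          refine sum_congr rfl fun k _ => ?_
          push_cast
          ring
      _ = ∑ j ∈ range (n + 1), ∑ k ∈ range (j + 1), c k := by
          rw [sum_range_succ (fun k => c k * ((n : R) - k)), ih, sub_self, mul_zero, add_zero,
            ← sum_range_succ]

theorem sum_range_wgt {α : ℝ} {n j : ℕ} (hj : j < n) :
    ∑ k ∈ range (j + 1), wgt α n k = 2 ^ α * (2 * (j : ℝ) + 1) ^ (-α) := by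
  induction j with
  | zero => simp [wgt]
  | succ j ih =>
    have hwgt : wgt α n (j + 1) =
        2 ^ α * ((2 * ((j + 1 : ℕ) : ℝ) + 1) ^ (-α) - (2 * ((j + 1 : ℕ) : ℝ) - 1) ^ (-α)) := by
      simp [wgt, hj.ne]
    rw [sum_range_succ, ih (by omega), hwgt]
    push_cast
    ring_nf

theorem sum_wgt_mul_sub (α : ℝ) (n : ℕ) :
    ∑ k ∈ range (n + 1), wgt α n k * ((n : ℝ) - k) =
      2 ^ α * ∑ k ∈ Icc 1 n, (2 * (k : ℝ) - 1) ^ (-α) := by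
  calc ∑ k ∈ range (n + 1), wgt α n k * ((n : ℝ) - k)
      = ∑ k ∈ range n, wgt α n k * ((n : ℝ) - k) := by
        rw [sum_range_succ, sub_self, mul_zero, add_zero]
    _ = ∑ j ∈ range n, 2 ^ α * (2 * ((j + 1 : ℕ) : ℝ) - 1) ^ (-α) := by
        rw [sum_range_mul_sub_eq_sum_partialSums]
        refine sum_congr rfl fun j hj => ?_
        rw [sum_range_wgt (mem_range.mp hj)]
        push_cast
        ring_nf
    _ = 2 ^ α * ∑ k ∈ Icc 1 n, (2 * (k : ℝ) - 1) ^ (-α) := by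
        rw [mul_sum, range_eq_Ico, sum_Ico_add' (fun k : ℕ => 2 ^ α * (2 * (k : ℝ) - 1) ^ (-α)),
          zero_add, Ico_add_one_right_eq_Icc]

theorem sum_sigmab_mul_sub (α : ℝ) {n : ℕ} (hn : 1 ≤ n) :
    ∑ k ∈ range (n + 1), sigmab α n k * ((n : ℝ) - k) =
      ∑ k ∈ range (n + 1), wgt α n k * ((n : ℝ) - k) - (2 ^ α - 1) * zetaR α := by
  obtain ⟨m, rfl⟩ : ∃ m, n = m + 1 := ⟨n - 1, by omega⟩
  simp only [sum_range_succ' _ (m + 1), sum_range_succ' _ m]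
  simp only [sigmab, Nat.add_eq_zero_iff, one_ne_zero, and_false, and_self, ↓reduceIte,
    Nat.add_eq_right, Nat.cast_add, Nat.cast_one, add_sub_add_right_eq_sub, zero_add,
    add_sub_cancel_right, CharP.cast_eq_zero, sub_zero]
  ring

theorem stmt3_general (α x : ℝ) (hx : 0 < x)
    (n : ℕ) (hn : 2 ≤ n) (h : ℝ) (hh : h = x / n) :
    (1 / (Real.Gamma (1 - α) * h ^ α)) *
        (∑ k ∈ Finset.range (n + 1), sigmab α n k * (((n:ℝ) - k) * h)) =
      h ^ (1 - α) / Real.Gamma (1 - α) *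
        ((1 - (2:ℝ) ^ α) * zetaR α +
          (2:ℝ) ^ α * ∑ k ∈ Finset.Icc 1 n, (2 * (k:ℝ) - 1) ^ (-α)) := by
  have hpos : 0 < h := hh ▸ div_pos hx (by exact_mod_cast (by omega : 0 < n))
  have hsum : ∑ k ∈ range (n + 1), sigmab α n k * (((n : ℝ) - k) * h) =
      h * ((1 - 2 ^ α) * zetaR α + 2 ^ α * ∑ k ∈ Icc 1 n, (2 * (k : ℝ) - 1) ^ (-α)) := by
    simp_rw [← mul_assoc, ← sum_mul, sum_sigmab_mul_sub α (by omega : 1 ≤ n), sum_wgt_mul_sub]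
    ring
  rw [hsum, Real.rpow_sub hpos, Real.rpow_one]
  ring

theorem stmt3 (α x : ℝ) (hα0 : 0 < α) (hα1 : α < 1) (hx : 0 < x)
    (n : ℕ) (hn : 2 ≤ n) (h : ℝ) (hh : h = x / n) :
    (1 / (Real.Gamma (1 - α) * h ^ α)) *
        (∑ k ∈ Finset.range (n + 1), sigmab α n k * (((n:ℝ) - k) * h)) =
      h ^ (1 - α) / Real.Gamma (1 - α) *
        ((1 - (2:ℝ) ^ α) * zetaR α +
          (2:ℝ) ^ α * ∑ k ∈ Finset.Icc 1 n, (2 * (k:ℝ) - 1) ^ (-α)) :=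
  stmt3_general α x hx n hn h hh
end

section
/- Let 0 < α < 1. Then there is a constant C > 0 such that for every positive integer m, |∑_{k=1}^{m} k^{−α} − ζ(α) − m^{1−α}/(1−α) − 1/(2 m^{α}) + α/(12 m^{1+α})| ≤ C / m^{2+α}. -/
open Finset

/-!
The defect `(1 - s) (n+1)^{-s} - ((n+2)^{1-s} - (n+1)^{1-s})` is `(1 - s)` times the error made by
replacing `∫_{n+1}^{n+2} t^{-s} dt` with `(n+1)^{-s}`. It is entire in `s` and `O(n^{-Re s - 1})`,
so its series is holomorphic on the half-plane `Re s > 0`. For `Re s > 1` the series telescopes to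
`(1 - s) (ζ(s) - 1/(s - 1))`, so by analytic continuation this also holds at `s = α`, which gives
`∑_{k ≤ N} k^{-α} - (N+1)^{1-α}/(1-α) → ζ(α)`. Hence the remainder `e_m` of the asymptotic formula
tends to `0`. One Euler–Maclaurin step (integration by parts up to the third Bernoulli polynomial)
gives `|e_m - e_{m+1}| ≤ 3 m^{-α-3}`, and summing this over the tail gives `|e_m| ≤ 6 m^{-α-2}`.
-/

open Filter Topology

theorem norm_sub_sub_smul_deriv_le {E : Type*} [NormedAddCommGroup E] [NormedSpace ℝ E]
    {f f' f'' : ℝ → E} {a b C : ℝ} (hab : a ≤ b)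
    (hf : ∀ x ∈ Set.Icc a b, HasDerivAt f (f' x) x)
    (hf' : ∀ x ∈ Set.Icc a b, HasDerivAt f' (f'' x) x)
    (hC : ∀ x ∈ Set.Icc a b, ‖f'' x‖ ≤ C) :
    ‖f b - f a - (b - a) • f' a‖ ≤ C * (b - a) ^ 2 := by
  have ha : a ∈ Set.Icc a b := Set.left_mem_Icc.mpr hab
  have hf'_sub : ∀ x ∈ Set.Icc a b, ‖f' x - f' a‖ ≤ C * (b - a) := fun x hx => by
    have := (convex_Icc a b).norm_image_sub_le_of_norm_hasDerivWithin_le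
      (fun y hy => (hf' y hy).hasDerivWithinAt) hC ha hx
    calc ‖f' x - f' a‖ ≤ C * ‖x - a‖ := this
      _ ≤ C * (b - a) := by
        have hC0 : 0 ≤ C := (norm_nonneg _).trans (hC a ha)
        gcongr
        rw [Real.norm_of_nonneg (by linarith [hx.1])]; linarith [hx.2]
  have key := (convex_Icc a b).norm_image_sub_le_of_norm_hasDerivWithin_le
    (f := fun x => f x - x • f' a) (f' := fun x => f' x - f' a)
    (fun x hx => ((hf x hx).sub ((hasDerivAt_id x).smul_const (f' a))).hasDerivWithinAt
      |>.congr_deriv (by simp)) hf'_sub ha (Set.right_mem_Icc.mpr hab)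
  calc ‖f b - f a - (b - a) • f' a‖ = ‖(f b - b • f' a) - (f a - a • f' a)‖ := by
        rw [sub_smul]; congr 1; abel
    _ ≤ C * (b - a) * ‖b - a‖ := key
    _ = C * (b - a) ^ 2 := by rw [Real.norm_of_nonneg (by linarith)]; ring

theorem hasDerivAt_ofReal_cpow_const_of_pos {x : ℝ} (hx : 0 < x) (c : ℂ) :
    HasDerivAt (fun t : ℝ => (t : ℂ) ^ c) (c * (x : ℂ) ^ (c - 1)) x := by
  simpa using ((hasDerivAt_id (x : ℂ)).cpow_const (c := c)
    (Complex.ofReal_mem_slitPlane.mpr hx)).comp_ofReal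

theorem summable_nat_add_one_rpow {c : ℝ} (hc : c < -1) :
    Summable (fun n : ℕ => ((n : ℝ) + 1) ^ c) := by
  simpa using (summable_nat_add_iff 1).mpr (Real.summable_nat_rpow.mpr hc)

theorem tendsto_nat_add_one_cpow_atTop {c : ℂ} (hc : c.re < 0) :
    Tendsto (fun N : ℕ => ((N : ℂ) + 1) ^ c) atTop (𝓝 0) := by
  rw [tendsto_zero_iff_norm_tendsto_zero]
  have h := (tendsto_rpow_neg_atTop (neg_pos.mpr hc)).comp
    (tendsto_natCast_atTop_atTop.comp (tendsto_add_atTop_nat 1))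
  refine h.congr fun N => ?_
  rw [neg_neg, Function.comp_apply, Function.comp_apply,
    ← Complex.norm_natCast_cpow_of_pos N.succ_pos]
  push_cast; rfl

theorem sum_Icc_one_eq_sum_range {M : Type*} [AddCommMonoid M] (f : ℕ → M) (N : ℕ) :
    ∑ k ∈ Icc 1 N, f k = ∑ n ∈ range N, f (n + 1) := by
  rw [← Finset.Ico_add_one_right_eq_Icc, range_eq_Ico, sum_Ico_add', zero_add]

theorem abs_le_of_abs_sub_succ_le_sub_succ {u v : ℕ → ℝ} {m : ℕ}
    (hu : Tendsto u atTop (𝓝 0)) (hv : Tendsto v atTop (𝓝 0)) (h : ∀ n ≥ m, |u n - u (n + 1)| ≤ v n - v (n + 1)) :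
    |u m| ≤ v m := by
  have hstep : ∀ M ≥ m, |u m - u M| ≤ v m - v M := by
    intro M hM
    induction M, hM using Nat.le_induction with
    | base => simp
    | succ M hM ih =>
      calc |u m - u (M + 1)| ≤ |u m - u M| + |u M - u (M + 1)| := abs_sub_le _ _ _
        _ ≤ v m - v M + (v M - v (M + 1)) := add_le_add ih (h M hM)
        _ = v m - v (M + 1) := by ring
  have hlim_u : Tendsto (fun M => |u m - u M|) atTop (𝓝 |u m|) := by
    simpa using (tendsto_const_nhds.sub hu).abs
  have hlim_v : Tendsto (fun M => v m - v M) atTop (𝓝 (v m)) := by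
    simpa using tendsto_const_nhds.sub hv
  exact le_of_tendsto_of_tendsto hlim_u hlim_v (eventually_atTop.mpr ⟨m, hstep⟩)

noncomputable def zetaDefect (s : ℂ) (n : ℕ) : ℂ :=
  (1 - s) * ((n : ℂ) + 1) ^ (-s) - (((n : ℂ) + 2) ^ (1 - s) - ((n : ℂ) + 1) ^ (1 - s))

theorem norm_zetaDefect_le {s : ℂ} (hs : -1 ≤ s.re) (n : ℕ) :
    ‖zetaDefect s n‖ ≤ ‖s * (1 - s)‖ * ((n : ℝ) + 1) ^ (-s.re - 1) := by
  have hn : (0 : ℝ) < n + 1 := by positivity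
  have hpos : ∀ t ∈ Set.Icc ((n : ℝ) + 1) (n + 2), 0 < t := fun t ht => hn.trans_le ht.1
  have key := norm_sub_sub_smul_deriv_le (a := (n : ℝ) + 1) (b := n + 2)
    (f := fun t : ℝ => (t : ℂ) ^ (1 - s)) (f' := fun t : ℝ => (1 - s) * (t : ℂ) ^ (-s))
    (f'' := fun t : ℝ => (1 - s) * (-s * (t : ℂ) ^ (-s - 1)))
    (C := ‖s * (1 - s)‖ * ((n : ℝ) + 1) ^ (-s.re - 1)) (by linarith)
    (fun t ht => by simpa using hasDerivAt_ofReal_cpow_const_of_pos (hpos t ht) (1 - s))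
    (fun t ht => (hasDerivAt_ofReal_cpow_const_of_pos (hpos t ht) (-s)).const_mul (1 - s))
    (fun t ht => by
      rw [norm_mul, norm_mul, norm_neg, Complex.norm_cpow_eq_rpow_re_of_pos (hpos t ht), norm_mul,
        mul_left_comm, ← mul_assoc]
      gcongr
      exact Real.rpow_le_rpow_of_nonpos hn ht.1 (by simp; linarith))
  rw [show (n : ℝ) + 2 - (n + 1) = 1 by ring, one_smul, one_pow, mul_one] at key
  have hdef : -zetaDefect s n = ((n + 2 : ℝ) : ℂ) ^ (1 - s) - ((n + 1 : ℝ) : ℂ) ^ (1 - s)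
      - (1 - s) * ((n + 1 : ℝ) : ℂ) ^ (-s) := by
    rw [zetaDefect]; push_cast; ring
  rwa [← norm_neg, hdef]

theorem summable_zetaDefect {s : ℂ} (hs : 0 < s.re) : Summable (zetaDefect s) :=
  .of_norm_bounded ((summable_nat_add_one_rpow (by linarith)).mul_left _)
    (norm_zetaDefect_le (by linarith))

theorem differentiable_zetaDefect (n : ℕ) : Differentiable ℂ (fun s => zetaDefect s n) := by
  have h1 : (n : ℂ) + 1 ≠ 0 := by norm_cast
  have h2 : (n : ℂ) + 2 ≠ 0 := by norm_cast
  unfold zetaDefect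
  fun_prop (disch := simp [h1, h2])

theorem differentiableOn_tsum_zetaDefect :
    DifferentiableOn ℂ (fun s => ∑' n, zetaDefect s n) {s | 0 < s.re} := by
  intro z hz
  set V : Set ℂ := {s | z.re / 2 < s.re ∧ ‖s‖ < ‖z‖ + 1}
  have hV : IsOpen V :=
    (isOpen_lt continuous_const Complex.continuous_re).inter
      (isOpen_lt continuous_norm continuous_const)
  have hzV : z ∈ V := ⟨by simp at hz; linarith, by linarith⟩
  refine (DifferentiableOn.differentiableAt ?_ (hV.mem_nhds hzV)).differentiableWithinAt
  refine Complex.differentiableOn_tsum_of_summable_norm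
    (((summable_nat_add_one_rpow (c := -(z.re / 2) - 1) (by simp at hz; linarith)).mul_left
      ((‖z‖ + 1) * (‖z‖ + 2))))
    (fun n => (differentiable_zetaDefect n).differentiableOn) hV (fun n s hs => ?_)
  calc ‖zetaDefect s n‖ ≤ ‖s * (1 - s)‖ * ((n : ℝ) + 1) ^ (-s.re - 1) :=
        norm_zetaDefect_le (by simp at hz; linarith [hs.1]) n
    _ ≤ (‖z‖ + 1) * (‖z‖ + 2) * ((n : ℝ) + 1) ^ (-(z.re / 2) - 1) := by
        gcongr
        · rw [norm_mul]
          gcongr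
          · exact hs.2.le
          · calc ‖1 - s‖ ≤ ‖(1 : ℂ)‖ + ‖s‖ := norm_sub_le _ _
              _ ≤ ‖z‖ + 2 := by simp; linarith [hs.2]
        · exact_mod_cast Nat.le_add_left 1 n
        · linarith [hs.1]

theorem sum_range_zetaDefect (s : ℂ) (N : ℕ) :
    ∑ n ∈ range N, zetaDefect s n
      = (1 - s) * ∑ n ∈ range N, ((n : ℂ) + 1) ^ (-s) - (((N : ℂ) + 1) ^ (1 - s) - 1) := by
  have htel := sum_range_sub (fun n : ℕ => ((n : ℂ) + 1) ^ (1 - s)) N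
  push_cast at htel
  rw [zero_add, Complex.one_cpow] at htel
  simp only [zetaDefect, sum_sub_distrib, ← mul_sum, ← htel, add_assoc, one_add_one_eq_two]

theorem hasSum_nat_add_one_cpow_neg {s : ℂ} (hs : 1 < s.re) :
    HasSum (fun n : ℕ => ((n : ℂ) + 1) ^ (-s)) (riemannZeta s) := by
  have hsum : Summable (fun n : ℕ => ((n : ℂ) + 1) ^ (-s)) := by
    refine .of_norm_bounded (summable_nat_add_one_rpow (c := -s.re) (by linarith)) fun n => ?_
    rw [← Nat.cast_add_one, Complex.norm_natCast_cpow_of_pos n.succ_pos]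
    push_cast; rfl
  convert hsum.hasSum using 1
  simp_rw [zeta_eq_tsum_one_div_nat_add_one_cpow hs, Complex.cpow_neg, one_div]

theorem hasSum_zetaDefect_of_one_lt_re {s : ℂ} (hs : 1 < s.re) :
    HasSum (zetaDefect s) ((1 - s) * riemannZeta₀ s) := by
  have hs1 : s ≠ 1 := by rintro rfl; simp at hs
  rw [(summable_zetaDefect (by linarith)).hasSum_iff_tendsto_nat]
  simp_rw [sum_range_zetaDefect]
  have hlim := ((hasSum_nat_add_one_cpow_neg hs).tendsto_sum_nat.const_mul (1 - s)).sub
    ((tendsto_nat_add_one_cpow_atTop (c := 1 - s) (by simp; linarith)).sub_const 1)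
  convert hlim using 2
  rw [riemannZeta₀, if_neg hs1]
  field_simp [sub_ne_zero.mpr hs1, sub_ne_zero.mpr hs1.symm]
  ring

theorem hasSum_zetaDefect {s : ℂ} (hs : 0 < s.re) :
    HasSum (zetaDefect s) ((1 - s) * riemannZeta₀ s) := by
  suffices Set.EqOn (fun s => ∑' n, zetaDefect s n) (fun s => (1 - s) * riemannZeta₀ s)
      {s | 0 < s.re} by
    simpa [← this hs] using (summable_zetaDefect hs).hasSum
  have hU : IsOpen {s : ℂ | 0 < s.re} := isOpen_lt continuous_const Complex.continuous_re
  have hV : IsOpen {s : ℂ | 1 < s.re} := isOpen_lt continuous_const Complex.continuous_re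
  refine (differentiableOn_tsum_zetaDefect.analyticOnNhd hU).eqOn_of_preconnected_of_eventuallyEq
    (fun z _ => (by fun_prop : Differentiable ℂ fun s => (1 - s) * riemannZeta₀ s).analyticAt z)
    (convex_halfSpace_re_gt 0).isPreconnected (z₀ := 2) (by simp) ?_
  filter_upwards [hV.mem_nhds (by simp : (1 : ℝ) < (2 : ℂ).re)] with s hs
  exact (hasSum_zetaDefect_of_one_lt_re hs).tsum_eq

theorem natCast_add_one_cpow_ofReal (n : ℕ) (x : ℝ) :
    ((n : ℂ) + 1) ^ (x : ℂ) = (((n + 1 : ℝ) ^ x : ℝ) : ℂ) := by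
  rw [Complex.ofReal_cpow (by positivity)]; push_cast; rfl

theorem tendsto_sum_rpow_neg_sub_zetaR {α : ℝ} (hα0 : 0 < α) (hα1 : α < 1) :
    Tendsto (fun N : ℕ => ∑ k ∈ Icc 1 N, (k : ℝ) ^ (-α) - ((N : ℝ) + 1) ^ (1 - α) / (1 - α)) atTop
      (𝓝 (zetaR α)) := by
  have h1α : 1 - α ≠ 0 := by linarith
  have hpartial (N : ℕ) : ∑ n ∈ range N, zetaDefect α n
      = (((1 - α) * ∑ k ∈ Icc 1 N, (k : ℝ) ^ (-α) - (((N : ℝ) + 1) ^ (1 - α) - 1) : ℝ) : ℂ) := by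
    rw [sum_range_zetaDefect, sum_Icc_one_eq_sum_range]
    push_cast [← natCast_add_one_cpow_ofReal]
    rfl
  have hval : ((1 - (α : ℂ)) * riemannZeta₀ α).re = (1 - α) * zetaR α + 1 := by
    have hα1' : (α : ℂ) ≠ 1 := by exact_mod_cast hα1.ne
    rw [riemannZeta₀, if_neg hα1', ← Complex.ofReal_one, ← Complex.ofReal_sub,
      ← Complex.ofReal_sub, ← Complex.ofReal_inv, Complex.re_ofReal_mul, Complex.sub_re, Complex.ofReal_re, zetaR]
    field_simp [sub_ne_zero.mpr hα1.ne]
    ring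
  have hlim := (Complex.continuous_re.tendsto _).comp
    (hasSum_zetaDefect (s := α) (by simpa using hα0)).tendsto_sum_nat
  simp only [Function.comp_def, hpartial, Complex.ofReal_re, hval] at hlim
  convert (hlim.sub_const 1).div_const (1 - α) using 2
  · field_simp; ring
  · field_simp; ring

noncomputable def zetaApprox (α x : ℝ) : ℝ :=
  x ^ (1 - α) / (1 - α) + x ^ (-α) / 2 - α / 12 * x ^ (-α - 1)

/-- Equals `zetaApprox α x` at `t = 0` and `zetaApprox α (x + 1) - (x + 1) ^ (-α)` at `t = 1`.
The polynomials `(t - t²)/2` and `t³/6 - t²/4 + t/12` are `(1/6 - B₂(t))/2` and `B₃(t)/6`, which is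
what makes all terms of the derivative except one of order `x ^ (-α - 3)` cancel. -/
noncomputable def zetaApproxInterp (α x t : ℝ) : ℝ :=
  zetaApprox α (x + t) - t * (x + t) ^ (-α) + α / 2 * (t - t ^ 2) * (x + t) ^ (-α - 1)
    - α * (α + 1) * (t ^ 3 / 6 - t ^ 2 / 4 + t / 12) * (x + t) ^ (-α - 2)

theorem hasDerivAt_zetaApproxInterp {α x t : ℝ} (hα : α ≠ 1) (hxt : 0 < x + t) :
    HasDerivAt (zetaApproxInterp α x)
      (α * (α + 1) * (α + 2) * (t ^ 3 / 6 - t ^ 2 / 4 + t / 12) * (x + t) ^ (-α - 3)) t := by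
  have hpow (c : ℝ) : HasDerivAt (fun u => (x + u) ^ c) (c * (x + t) ^ (c - 1)) t := by
    simpa using ((hasDerivAt_id t).const_add x).rpow_const (p := c) (Or.inl hxt.ne')
  have hpoly2 : HasDerivAt (fun u : ℝ => α / 2 * (u - u ^ 2)) (α / 2 * (1 - 2 * t)) t :=
    (((hasDerivAt_id t).sub (hasDerivAt_pow 2 t)).const_mul (α / 2)).congr_deriv
      (by push_cast; ring)
  have hpoly3 : HasDerivAt (fun u : ℝ => α * (α + 1) * (u ^ 3 / 6 - u ^ 2 / 4 + u / 12))
      (α * (α + 1) * (t ^ 2 / 2 - t / 2 + 1 / 12)) t :=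
    (((((hasDerivAt_pow 3 t).div_const 6).sub ((hasDerivAt_pow 2 t).div_const 4)).add
      ((hasDerivAt_id t).div_const 12)).const_mul (α * (α + 1))).congr_deriv
      (by push_cast; ring)
  have h := (((((hpow (1 - α)).div_const (1 - α)).add ((hpow (-α)).div_const 2)).sub
    ((hpow (-α - 1)).const_mul (α / 12))).sub ((hasDerivAt_id t).mul (hpow (-α)))).add
    (hpoly2.mul (hpow (-α - 1))) |>.sub (hpoly3.mul (hpow (-α - 2)))
  refine h.congr_deriv ?_
  have h1α : 1 - α ≠ 0 := sub_ne_zero.mpr (Ne.symm hα)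
  have e1 : (x + t) ^ (-α - 1) = (x + t) ^ (-α) / (x + t) := by
    rw [Real.rpow_sub_one hxt.ne']
  have e2 : (x + t) ^ (-α - 2) = (x + t) ^ (-α) / (x + t) ^ 2 := by
    rw [Real.rpow_sub hxt, Real.rpow_two]
  have e3 : (x + t) ^ (-α - 3) = (x + t) ^ (-α) / (x + t) ^ 3 := by
    rw [Real.rpow_sub hxt]; norm_cast
  rw [show 1 - α - 1 = -α by ring, show -α - 1 - 1 = -α - 2 by ring,
    show -α - 2 - 1 = -α - 3 by ring, e1, e2, e3, id]
  field_simp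
  ring

theorem abs_zetaApprox_add_one_sub_le {α x : ℝ} (hα0 : 0 ≤ α) (hα1 : α < 1) (hx : 0 < x) :
    |zetaApprox α (x + 1) - zetaApprox α x - (x + 1) ^ (-α)| ≤ 3 * x ^ (-α - 3) := by
  have hΨ0 : zetaApproxInterp α x 0 = zetaApprox α x := by simp [zetaApproxInterp]
  have hΨ1 : zetaApproxInterp α x 1 = zetaApprox α (x + 1) - (x + 1) ^ (-α) := by
    norm_num [zetaApproxInterp]
  have hderiv_le : ∀ t ∈ Set.Icc (0 : ℝ) 1,
      ‖α * (α + 1) * (α + 2) * (t ^ 3 / 6 - t ^ 2 / 4 + t / 12) * (x + t) ^ (-α - 3)‖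
        ≤ 3 * x ^ (-α - 3) := fun t ⟨ht0, ht1⟩ => by
    have hcoef : α * (α + 1) * (α + 2) ≤ 6 := by nlinarith [mul_nonneg hα0 hα0]
    have hpoly : |t ^ 3 / 6 - t ^ 2 / 4 + t / 12| ≤ 1 / 2 := by
      rw [abs_le]
      constructor <;> nlinarith [pow_le_one₀ ht0 ht1 (n := 2), pow_le_one₀ ht0 ht1 (n := 3),
        pow_nonneg ht0 2, pow_nonneg ht0 3]
    have hpow : (x + t) ^ (-α - 3) ≤ x ^ (-α - 3) :=
      Real.rpow_le_rpow_of_nonpos hx (by linarith) (by linarith)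
    rw [Real.norm_eq_abs, abs_mul, abs_mul,
      abs_of_nonneg (by positivity : 0 ≤ α * (α + 1) * (α + 2)),
      abs_of_nonneg (by positivity : 0 ≤ (x + t) ^ (-α - 3))]
    calc α * (α + 1) * (α + 2) * |t ^ 3 / 6 - t ^ 2 / 4 + t / 12| * (x + t) ^ (-α - 3)
        ≤ 6 * (1 / 2) * x ^ (-α - 3) := by gcongr
      _ = 3 * x ^ (-α - 3) := by ring
  have h := (convex_Icc (0 : ℝ) 1).norm_image_sub_le_of_norm_hasDerivWithin_le
    (fun t ht => (hasDerivAt_zetaApproxInterp hα1.ne (by linarith [ht.1])).hasDerivWithinAt)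
    hderiv_le (Set.left_mem_Icc.mpr zero_le_one) (Set.right_mem_Icc.mpr zero_le_one)
  rw [hΨ0, hΨ1, sub_right_comm] at h
  simpa using h

noncomputable def zetaRemainder (α : ℝ) (m : ℕ) : ℝ :=
  ∑ k ∈ Icc 1 m, (k : ℝ) ^ (-α) - zetaApprox α m - zetaR α

theorem tendsto_zetaRemainder {α : ℝ} (hα0 : 0 < α) (hα1 : α < 1) :
    Tendsto (zetaRemainder α) atTop (𝓝 0) := by
  rw [← tendsto_add_atTop_iff_nat 1]
  have hN : Tendsto (fun N : ℕ => (N : ℝ) + 1) atTop atTop :=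
    tendsto_atTop_add_const_right _ 1 tendsto_natCast_atTop_atTop
  have h1 := (tendsto_rpow_neg_atTop hα0).comp hN
  have h2 := (tendsto_rpow_neg_atTop (by linarith : 0 < α + 1)).comp hN
  have h := (((tendsto_sum_rpow_neg_sub_zetaR hα0 hα1).sub_const (zetaR α)).add
    (h1.div_const 2)).add (h2.const_mul (α / 12))
  simp only [sub_self, zero_div, mul_zero, add_zero] at h
  refine h.congr fun N => ?_
  simp only [zetaRemainder, zetaApprox, sum_Icc_succ_top (Nat.le_add_left 1 N),
    Function.comp_apply]
  push_cast
  rw [neg_add']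
  ring

theorem zetaRemainder_sub_succ (α : ℝ) (n : ℕ) :
    zetaRemainder α n - zetaRemainder α (n + 1)
      = zetaApprox α (n + 1) - zetaApprox α n - ((n : ℝ) + 1) ^ (-α) := by
  simp only [zetaRemainder, sum_Icc_succ_top (Nat.le_add_left 1 n)]
  push_cast
  ring

theorem abs_zetaRemainder_le {α : ℝ} (hα0 : 0 < α) (hα1 : α < 1) {m : ℕ} (hm : 0 < m) :
    |zetaRemainder α m| ≤ 6 * (m : ℝ) ^ (-α - 2) := by
  have hm0 : (0 : ℝ) < m := by exact_mod_cast hm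
  have hp : 0 ≤ (m : ℝ) ^ (-α - 1) := by positivity
  have hbound := abs_le_of_abs_sub_succ_le_sub_succ (m := m)
    (v := fun n => 6 * (m : ℝ) ^ (-α - 1) / n)
    (tendsto_zetaRemainder hα0 hα1) (tendsto_const_nhds.div_atTop tendsto_natCast_atTop_atTop)
    (fun n hn => ?_)
  · calc |zetaRemainder α m| ≤ 6 * (m : ℝ) ^ (-α - 1) / m := hbound
      _ = 6 * (m : ℝ) ^ (-α - 2) := by
        rw [mul_div_assoc, ← Real.rpow_sub_one hm0.ne']; ring_nf
  have hn0 : (0 : ℝ) < n := by exact_mod_cast hm.trans_le hn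
  rw [zetaRemainder_sub_succ]
  calc _ ≤ 3 * (n : ℝ) ^ (-α - 3) := abs_zetaApprox_add_one_sub_le hα0.le hα1 hn0
    _ = 3 * (n : ℝ) ^ (-α - 1) / n ^ 2 := by
        rw [show -α - 3 = (-α - 1) - 2 by ring, Real.rpow_sub hn0, Real.rpow_two]; ring
    _ ≤ 3 * (m : ℝ) ^ (-α - 1) / n ^ 2 := by
        have hmn : (n : ℝ) ^ (-α - 1) ≤ (m : ℝ) ^ (-α - 1) :=
          Real.rpow_le_rpow_of_nonpos hm0 (by exact_mod_cast hn) (by linarith)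
        gcongr
    _ ≤ 6 * (m : ℝ) ^ (-α - 1) / n - 6 * (m : ℝ) ^ (-α - 1) / ((n + 1 : ℕ) : ℝ) := by
        have hn1 : (1 : ℝ) ≤ n := by exact_mod_cast hm.trans_le hn
        rw [div_sub_div _ _ hn0.ne' (by positivity),
          div_le_div_iff₀ (by positivity) (by positivity)]
        push_cast
        nlinarith [mul_nonneg (mul_nonneg hp (sub_nonneg.mpr hn1)) hn0.le]

theorem stmt10 (α : ℝ) (hα0 : 0 < α) (hα1 : α < 1) :
    ∃ C > 0, ∀ m : ℕ, 0 < m →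
      |(∑ k ∈ Finset.Icc 1 m, (k:ℝ) ^ (-α)) - zetaR α - (m:ℝ) ^ (1 - α) / (1 - α)
          - 1 / (2 * (m:ℝ) ^ α) + α / (12 * (m:ℝ) ^ (1 + α))| ≤ C / (m:ℝ) ^ (2 + α) := by
  refine ⟨6, by norm_num, fun m hm => ?_⟩
  have hm0 : (0 : ℝ) < m := by exact_mod_cast hm
  have hrpow_neg (c : ℝ) : (m : ℝ) ^ (-c) = ((m : ℝ) ^ c)⁻¹ := Real.rpow_neg hm0.le c
  have hexpr : (∑ k ∈ Icc 1 m, (k : ℝ) ^ (-α)) - zetaR α - (m : ℝ) ^ (1 - α) / (1 - α)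
      - 1 / (2 * (m : ℝ) ^ α) + α / (12 * (m : ℝ) ^ (1 + α)) = zetaRemainder α m := by
    rw [zetaRemainder, zetaApprox, show -α - 1 = -(1 + α) by ring, hrpow_neg, hrpow_neg]
    ring
  rw [hexpr, div_eq_mul_inv, ← hrpow_neg, show -(2 + α) = -α - 2 by ring]
  exact abs_zetaRemainder_le hα0 hα1 hm
end

section
/- Let 0 < α < 1. There is a constant C > 0 such that for every integer k ≥ 2, |(k+1)^{1−α} − 2k^{1−α} + (k−1)^{1−α} − α(α−1)/k^{1+α}| ≤ C / k^{2+α}. -/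
/-!
Put `g x = x ^ (1 - α)`. The interior weight is the central second difference of `g` at `k` with
step `1`, and `α (α - 1) / k ^ (1 + α) = g'' k`. A second difference differs from the second
derivative at the centre by at most twice the oscillation of `g''` over the stencil, and on
`[k - 1, k + 1]` that oscillation is controlled by `|g'''| ≲ (k - 1) ^ (-(2 + α)) ≲ k ^ (-(2 + α))`.
-/

open Set

theorem abs_second_difference_sub_le {g g' g'' : ℝ → ℝ} {a h B M : ℝ} (hh : 0 ≤ h)
    (hg : ∀ x ∈ Icc (a - h) (a + h), HasDerivAt g (g' x) x)
    (hg' : ∀ x ∈ Icc (a - h) (a + h), HasDerivAt g' (g'' x) x)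
    (hM : ∀ x ∈ Icc (a - h) (a + h), |g'' x - B| ≤ M) :
    |g (a + h) - 2 * g a + g (a - h) - h ^ 2 * B| ≤ 2 * M * h ^ 2 := by
  have hmem : ∀ t ∈ Icc 0 h, a + t ∈ Icc (a - h) (a + h) ∧ a - t ∈ Icc (a - h) (a + h) :=
    fun t ⟨ht0, hth⟩ => ⟨⟨by linarith, by linarith⟩, ⟨by linarith, by linarith⟩⟩
  -- `φ h - φ 0` is the second difference; `φ` is even and `|φ''| ≤ 2 M`, so the mean value
  -- inequality applied to `φ'` and then to `φ` gives the bound.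
  set φ : ℝ → ℝ := fun t => g (a + t) + g (a - t) - t ^ 2 * B
  set φ' : ℝ → ℝ := fun t => g' (a + t) - g' (a - t) - 2 * t * B
  have hφ : ∀ t ∈ Icc 0 h, HasDerivAt φ (φ' t) t := by
    intro t ht
    have hright := (hg _ (hmem t ht).1).comp t ((hasDerivAt_id t).const_add a)
    have hleft := (hg _ (hmem t ht).2).comp t ((hasDerivAt_id t).const_sub a)
    refine ((hright.add hleft).sub ((hasDerivAt_pow 2 t).mul_const B)).congr_deriv ?_
    simp only [φ']; push_cast; ring
  have hφ' : ∀ t ∈ Icc 0 h, HasDerivAt φ' ((g'' (a + t) - B) + (g'' (a - t) - B)) t := by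
    intro t ht
    have hright := (hg' _ (hmem t ht).1).comp t ((hasDerivAt_id t).const_add a)
    have hleft := (hg' _ (hmem t ht).2).comp t ((hasDerivAt_id t).const_sub a)
    refine ((hright.sub hleft).sub (((hasDerivAt_id t).const_mul 2).mul_const B)).congr_deriv ?_
    ring
  have hφ'_le : ∀ t ∈ Icc 0 h, |φ' t| ≤ 2 * M * h := by
    intro t ht
    have hφ'_sub := norm_image_sub_le_of_norm_deriv_le_segment'
      (fun s hs => (hφ' s hs).hasDerivWithinAt) (C := 2 * M)
      (fun s hs => by
        have := hmem s (Ico_subset_Icc_self hs)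
        exact (abs_add_le _ _).trans (by linarith [hM _ this.1, hM _ this.2])) t ht
    have hM0 : 0 ≤ M := (abs_nonneg _).trans (hM a ⟨by linarith, by linarith⟩)
    simp only [φ', Real.norm_eq_abs, add_zero, sub_zero, mul_zero, zero_mul, sub_self] at hφ'_sub
    nlinarith [ht.2]
  have hφ_sub := norm_image_sub_le_of_norm_deriv_le_segment'
    (fun t ht => (hφ t ht).hasDerivWithinAt) (fun t ht => hφ'_le t (Ico_subset_Icc_self ht))
    h ⟨hh, le_rfl⟩
  calc |g (a + h) - 2 * g a + g (a - h) - h ^ 2 * B| = ‖φ h - φ 0‖ := by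
        simp only [φ, Real.norm_eq_abs]; ring_nf
    _ ≤ 2 * M * h * (h - 0) := hφ_sub
    _ = 2 * M * h ^ 2 := by ring

theorem hasDerivAt_const_mul_rpow (c p : ℝ) {x : ℝ} (hx : x ≠ 0) :
    HasDerivAt (fun y => c * y ^ p) (c * p * x ^ (p - 1)) x := by
  simpa only [mul_assoc] using (Real.hasDerivAt_rpow_const (p := p) (Or.inl hx)).const_mul c

theorem rpow_neg_le_of_half_le {a x s : ℝ} (ha : 0 < a) (hx : a / 2 ≤ x) (hs0 : 0 ≤ s)
    (hs3 : s ≤ 3) : x ^ (-s) ≤ 8 / a ^ s :=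
  calc x ^ (-s) ≤ (a / 2) ^ (-s) := Real.rpow_le_rpow_of_nonpos (by positivity) hx (by linarith)
    _ = 2 ^ s / a ^ s := by
      rw [Real.rpow_neg (by positivity), Real.div_rpow ha.le zero_le_two, inv_div]
    _ ≤ 2 ^ (3 : ℝ) / a ^ s := by
      gcongr
      norm_num
    _ = 8 / a ^ s := by norm_num

theorem norm_third_deriv_rpow_one_sub_le {α a x : ℝ} (hα0 : 0 < α) (hα1 : α < 1) (ha : 0 < a)
    (hx : a / 2 ≤ x) : ‖(1 - α) * -α * (-α - 1) * x ^ (-α - 1 - 1)‖ ≤ 16 / a ^ (2 + α) := by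
  have hx0 : 0 < x := by linarith
  have hcoeff : (1 - α) * α * (1 + α) ≤ 2 := by nlinarith [mul_pos hα0 (sub_pos.2 hα1)]
  have hpow := rpow_neg_le_of_half_le (s := 2 + α) ha hx (by positivity) (by linarith)
  rw [show -α - 1 - 1 = -(2 + α) by ring, Real.norm_eq_abs, abs_mul,
    abs_of_pos (Real.rpow_pos_of_pos hx0 _),
    show (1 - α) * -α * (-α - 1) = (1 - α) * α * (1 + α) by ring,
    abs_of_pos (by have := sub_pos.2 hα1; positivity)]
  calc _ ≤ 2 * (8 / a ^ (2 + α)) := mul_le_mul hcoeff hpow (Real.rpow_nonneg hx0.le _) zero_le_two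
    _ = 16 / a ^ (2 + α) := by ring

theorem abs_second_deriv_rpow_one_sub_sub_le {α a x : ℝ} (hα0 : 0 < α) (hα1 : α < 1)
    (ha : 2 ≤ a) (hx : x ∈ Icc (a - 1) (a + 1)) :
    |(1 - α) * -α * x ^ (-α - 1) - (1 - α) * -α * a ^ (-α - 1)| ≤ 16 / a ^ (2 + α) := by
  have hderiv : ∀ y ∈ Icc (a - 1) (a + 1), HasDerivWithinAt (fun y => (1 - α) * -α * y ^ (-α - 1))
      ((1 - α) * -α * (-α - 1) * y ^ (-α - 1 - 1)) (Icc (a - 1) (a + 1)) y := fun y hy =>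
    (hasDerivAt_const_mul_rpow _ _ (by linarith [hy.1])).hasDerivWithinAt
  have hmvt := (convex_Icc (a - 1) (a + 1)).norm_image_sub_le_of_norm_hasDerivWithin_le hderiv
    (fun y hy => norm_third_deriv_rpow_one_sub_le (a := a) hα0 hα1 (by positivity)
      (by linarith [hy.1]))
    ⟨by linarith, by linarith⟩ hx
  have hxa : ‖x - a‖ ≤ 1 := abs_sub_le_iff.2 ⟨by linarith [hx.2], by linarith [hx.1]⟩
  calc _ ≤ 16 / a ^ (2 + α) * ‖x - a‖ := hmvt
    _ ≤ 16 / a ^ (2 + α) * 1 := by gcongr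
    _ = 16 / a ^ (2 + α) := mul_one _

theorem stmt14 (α : ℝ) (hα0 : 0 < α) (hα1 : α < 1) :
    ∃ C > 0, ∀ k : ℕ, 2 ≤ k →
      |((k:ℝ) + 1) ^ (1 - α) - 2 * (k:ℝ) ^ (1 - α) + ((k:ℝ) - 1) ^ (1 - α)
          - α * (α - 1) / (k:ℝ) ^ (1 + α)| ≤ C / (k:ℝ) ^ (2 + α) := by
  refine ⟨32, by norm_num, fun k hk => ?_⟩
  have ha : (2 : ℝ) ≤ k := by exact_mod_cast hk
  set a : ℝ := (k : ℝ)
  have hpos : ∀ x ∈ Icc (a - 1) (a + 1), x ≠ 0 := fun x hx => by linarith [hx.1]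
  have hg : ∀ x ∈ Icc (a - 1) (a + 1),
      HasDerivAt (fun y => y ^ (1 - α)) ((1 - α) * x ^ (-α)) x := fun x hx =>
    (Real.hasDerivAt_rpow_const (Or.inl (hpos x hx))).congr_deriv (by rw [sub_sub_cancel_left])
  have hg' : ∀ x ∈ Icc (a - 1) (a + 1),
      HasDerivAt (fun y => (1 - α) * y ^ (-α)) ((1 - α) * -α * x ^ (-α - 1)) x := fun x hx =>
    hasDerivAt_const_mul_rpow _ _ (hpos x hx)
  have hB : (1 - α) * -α * a ^ (-α - 1) = α * (α - 1) / a ^ (1 + α) := by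
    rw [show -α - 1 = -(1 + α) by ring, Real.rpow_neg (by positivity)]
    ring
  have key := abs_second_difference_sub_le zero_le_one hg hg'
    (fun x hx => abs_second_deriv_rpow_one_sub_sub_le hα0 hα1 ha hx)
  simp only [one_pow, one_mul, hB] at key
  exact key.trans_eq (by ring)
end

section
/- Let 0 < α < 1, τ₀ > 0, and let y be twice continuously differentiable on [0, τ₀]. Then there is a constant C > 0 such that for every τ ∈ (0, τ₀], |D^α y(τ) − (y(τ) − y(0))/(Γ(2−α) τ^{α})| ≤ C τ^{2−α}. -/
/-!
By the mean value theorem the secant slope `(y τ - y 0) / τ` equals `y' ξ` for some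
`ξ ∈ (0, τ)`, and the correction term is exactly the Caputo derivative of the line
`t ↦ y' ξ * t`. Since `y'` is Lipschitz, `|y' t - y' ξ| ≤ K τ` on `(0, τ)`; integrating this
against the kernel `(τ - t) ^ (-α)`, whose integral is `τ ^ (1 - α) / (1 - α)`, gives the bound
`K τ ^ (2 - α) / Γ(2 - α)`.
-/

open Set MeasureTheory intervalIntegral

theorem intervalIntegrable_sub_rpow_neg {α : ℝ} (hα : α < 1) (τ a b : ℝ) :
    IntervalIntegrable (fun t => (τ - t) ^ (-α)) volume a b := by
  simpa using (intervalIntegrable_rpow' (a := τ - a) (b := τ - b)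
    (by linarith : (-1 : ℝ) < -α)).comp_sub_left τ

theorem integral_sub_rpow_neg {α : ℝ} (hα : α < 1) (τ : ℝ) :
    ∫ t in (0 : ℝ)..τ, (τ - t) ^ (-α) = τ ^ (1 - α) / (1 - α) := by
  rw [integral_comp_sub_left (fun s => s ^ (-α)), sub_self, sub_zero,
    integral_rpow (Or.inl (by linarith)), Real.zero_rpow (by linarith), neg_add_eq_sub, sub_zero]

theorem ae_imp_of_forall_mem_Ioo {p : ℝ → Prop} {a b : ℝ} (h : ∀ t ∈ Ioo a b, p t) :
    ∀ᵐ t, t ∈ Ioc a b → p t := by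
  filter_upwards [Ioo_ae_eq_Ioc.mem_iff] with t ht hmem using h t (ht.mpr hmem)

theorem intervalIntegrable_mul_of_abs_le {f w : ℝ → ℝ} {a b B : ℝ} (hab : a ≤ b)
    (hf : Measurable f) (hw : IntervalIntegrable w volume a b)
    (hfB : ∀ t ∈ Ioo a b, |f t| ≤ B) :
    IntervalIntegrable (fun t => f t * w t) volume a b := by
  rw [intervalIntegrable_iff_integrableOn_Ioc_of_le hab] at hw ⊢
  exact hw.bdd_mul hf.aestronglyMeasurable
    ((ae_restrict_iff' measurableSet_Ioc).2 (ae_imp_of_forall_mem_Ioo hfB))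

theorem abs_integral_mul_le {f w : ℝ → ℝ} {a b B : ℝ} (hab : a ≤ b)
    (hw : IntervalIntegrable w volume a b) (hw0 : ∀ t ∈ Ioo a b, 0 ≤ w t)
    (hfB : ∀ t ∈ Ioo a b, |f t| ≤ B) :
    |∫ t in a..b, f t * w t| ≤ B * ∫ t in a..b, w t := by
  rw [← intervalIntegral.integral_const_mul, ← Real.norm_eq_abs]
  refine norm_integral_le_of_norm_le hab (ae_imp_of_forall_mem_Ioo fun t ht => ?_)
    (hw.const_mul B)
  rw [Real.norm_eq_abs, abs_mul, abs_of_nonneg (hw0 t ht)]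
  exact mul_le_mul_of_nonneg_right (hfB t ht) (hw0 t ht)

theorem Real.Gamma_two_sub {α : ℝ} (hα : α ≠ 1) :
    Real.Gamma (2 - α) = (1 - α) * Real.Gamma (1 - α) := by
  rw [show 2 - α = (1 - α) + 1 by ring, Real.Gamma_add_one (sub_ne_zero.2 hα.symm)]

theorem abs_caputo_sub_le {α τ B c : ℝ} {y : ℝ → ℝ} (hα : α < 1) (hτ : 0 ≤ τ)
    (hyB : ∀ t ∈ Ioo 0 τ, |deriv y t - c| ≤ B) :
    |caputo α y τ - c * τ ^ (1 - α) / Real.Gamma (2 - α)| ≤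
      B * τ ^ (1 - α) / Real.Gamma (2 - α) := by
  have hw := intervalIntegrable_sub_rpow_neg hα τ 0 τ
  have hdev := intervalIntegrable_mul_of_abs_le hτ ((measurable_deriv y).sub_const c) hw hyB
  have hw0 : ∀ t ∈ Ioo 0 τ, 0 ≤ (τ - t) ^ (-α) := fun t ht =>
    Real.rpow_nonneg (sub_nonneg.2 ht.2.le) _
  have hΓ : 0 < Real.Gamma (1 - α) := Real.Gamma_pos_of_pos (sub_pos.2 hα)
  have hsplit : caputo α y τ - c * τ ^ (1 - α) / Real.Gamma (2 - α) =
      (1 / Real.Gamma (1 - α)) * ∫ t in (0 : ℝ)..τ, (deriv y t - c) * (τ - t) ^ (-α) := by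
    have hlin : ∫ t in (0 : ℝ)..τ, deriv y t * (τ - t) ^ (-α) =
        (∫ t in (0 : ℝ)..τ, (deriv y t - c) * (τ - t) ^ (-α)) +
          c * ∫ t in (0 : ℝ)..τ, (τ - t) ^ (-α) := by
      rw [← intervalIntegral.integral_const_mul, ← integral_add hdev (hw.const_mul c)]
      exact integral_congr fun t _ => by ring
    rw [caputo, hlin, integral_sub_rpow_neg hα, Real.Gamma_two_sub hα.ne]
    field_simp
    ring
  rw [hsplit, abs_mul, abs_of_pos (one_div_pos.2 hΓ), Real.Gamma_two_sub hα.ne]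
  calc 1 / Real.Gamma (1 - α) * |∫ t in (0 : ℝ)..τ, (deriv y t - c) * (τ - t) ^ (-α)|
      ≤ 1 / Real.Gamma (1 - α) * (B * ∫ t in (0 : ℝ)..τ, (τ - t) ^ (-α)) :=
        mul_le_mul_of_nonneg_left (abs_integral_mul_le hτ hw hw0 hyB) (by positivity)
    _ = B * τ ^ (1 - α) / ((1 - α) * Real.Gamma (1 - α)) := by
        rw [integral_sub_rpow_neg hα]
        field_simp

theorem exists_lipschitzOnWith_deriv {y : ℝ → ℝ} {a b : ℝ} (hab : a < b)
    (hy : ContDiffOn ℝ 2 y (Icc a b)) : ∃ K, LipschitzOnWith K (deriv y) (Ioo a b) := by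
  have hy' : ContDiffOn ℝ 1 (derivWithin y (Icc a b)) (Icc a b) :=
    hy.derivWithin (uniqueDiffOn_Icc hab) (by norm_num)
  obtain ⟨K, hK⟩ := hy'.exists_lipschitzOnWith one_ne_zero (convex_Icc a b) isCompact_Icc
  have hderiv : ∀ t ∈ Ioo a b, derivWithin y (Icc a b) t = deriv y t := fun t ht =>
    derivWithin_of_mem_nhds (Icc_mem_nhds ht.1 ht.2)
  refine ⟨K, LipschitzOnWith.of_dist_le_mul fun s hs t ht => ?_⟩
  rw [← hderiv s hs, ← hderiv t ht]
  exact hK.dist_le_mul s (Ioo_subset_Icc_self hs) t (Ioo_subset_Icc_self ht)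

theorem stmt18_general (α τ₀ : ℝ) (hα1 : α < 1) (hτ₀ : 0 < τ₀)
    (y : ℝ → ℝ) (hy : ContDiffOn ℝ 2 y (Set.Icc 0 τ₀)) :
    ∃ C > 0, ∀ τ : ℝ, τ ∈ Set.Ioc 0 τ₀ →
      |caputo α y τ - (y τ - y 0) / (Real.Gamma (2 - α) * τ ^ α)| ≤ C * τ ^ (2 - α) := by
  obtain ⟨K, hK⟩ := exists_lipschitzOnWith_deriv hτ₀ hy
  have hΓ : 0 < Real.Gamma (2 - α) := Real.Gamma_pos_of_pos (by linarith)
  refine ⟨(K + 1) / Real.Gamma (2 - α), by positivity, fun τ ⟨hτ, hττ₀⟩ => ?_⟩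
  have hsub : Ioo 0 τ ⊆ Ioo 0 τ₀ := Ioo_subset_Ioo_right hττ₀
  have hyτ : ContDiffOn ℝ 2 y (Icc 0 τ) := hy.mono (Icc_subset_Icc_right hττ₀)
  obtain ⟨ξ, hξ, hξslope⟩ := exists_deriv_eq_slope y hτ hyτ.continuousOn
    ((hyτ.differentiableOn (by norm_num)).mono Ioo_subset_Icc_self)
  have hdev : ∀ t ∈ Ioo 0 τ, |deriv y t - deriv y ξ| ≤ K * τ := fun t ht =>
    (hK.dist_le_mul t (hsub ht) ξ (hsub hξ)).trans <| by
      rw [Real.dist_eq]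
      exact mul_le_mul_of_nonneg_left
        (abs_le.2 ⟨by linarith [ht.1, hξ.2], by linarith [ht.2, hξ.1]⟩) K.2
  have hτα : τ ^ α * τ ^ (1 - α) = τ := by rw [← Real.rpow_add hτ]; simp
  have hτ2α : τ * τ ^ (1 - α) = τ ^ (2 - α) := by
    rw [← Real.rpow_one_add' hτ.le (by linarith)]; ring_nf
  have hslope : deriv y ξ * τ ^ (1 - α) / Real.Gamma (2 - α) =
      (y τ - y 0) / (Real.Gamma (2 - α) * τ ^ α) := by
    rw [hξslope, sub_zero]
    field_simp
    linear_combination (y τ - y 0) * hτα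
  calc |caputo α y τ - (y τ - y 0) / (Real.Gamma (2 - α) * τ ^ α)|
      ≤ K * τ * τ ^ (1 - α) / Real.Gamma (2 - α) :=
        hslope ▸ abs_caputo_sub_le hα1 hτ.le hdev
    _ ≤ (K + 1) / Real.Gamma (2 - α) * τ ^ (2 - α) := by
        rw [mul_assoc, hτ2α, div_mul_eq_mul_div]
        gcongr
        linarith

theorem stmt18 (α τ₀ : ℝ) (hα0 : 0 < α) (hα1 : α < 1) (hτ₀ : 0 < τ₀)
    (y : ℝ → ℝ) (hy : ContDiffOn ℝ 2 y (Set.Icc 0 τ₀)) :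
    ∃ C > 0, ∀ τ : ℝ, τ ∈ Set.Ioc 0 τ₀ →
      |caputo α y τ - (y τ - y 0) / (Real.Gamma (2 - α) * τ ^ α)| ≤ C * τ ^ (2 - α) :=
  stmt18_general α τ₀ hα1 hτ₀ y hy
end
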